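/- Assume H is C², ℤⁿ-periodic in its first argument, with D²_{pp}H(x,p) ≥ 2θIₙ and |D_xH(x,p)| ≤ C₀(1+|p|²) for all (x,p), and a : ℝⁿ → ℝ is C², ℤⁿ-periodic and nonnegative. There exists C > 0, depending only on n, θ, C₀, M and the C² norm of a, such that for every ε ∈ (0,1] the following holds. Let w be a smooth function on ℝⁿ × [0,1], ℤⁿ-periodic in x, solving ε w_t + H(x,Dw) = (a(x)+ε⁴)Δw; let v be a smooth ℤⁿ-periodic function solving H(x,Dv) = (a(x)+ε⁴)Δv + H̄_ε for a constant H̄_ε; let σ be a smooth nonnegative function, ℤⁿ-periodic in x, solving −ε σ_t − div(D_pH(x,Dw)σ) = Δ((a(x)+ε⁴)σ) with ∫_Q σ(x,t) dx = 1 for every t; and assume ∥w∥_{L∞(ℝⁿ×[0,1])} ≤ M, ∥v∥_{L∞} ≤ M, and |H̄_ε| ≤ Mε². Then ∫₀¹∫_Q |D(w−v)(x,t)|² σ(x,t) dx dt ≤ C ε. -/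

import Mathlib

open MeasureTheory Finset

noncomputable section

/-- Partial derivative of `f` at `x` in the `i`-th coordinate direction. -/
def pd {n : ℕ} (f : (Fin n → ℝ) → ℝ) (i : Fin n) (x : Fin n → ℝ) : ℝ :=
  fderiv ℝ f x (Pi.single i 1)

/-- Squared euclidean norm of the (spatial) gradient, `|Df(x)|²`. -/
def gradSq {n : ℕ} (f : (Fin n → ℝ) → ℝ) (x : Fin n → ℝ) : ℝ :=
  ∑ i, (pd f i x) ^ 2

/-- Laplacian of `f` at `x`. -/
def lap {n : ℕ} (f : (Fin n → ℝ) → ℝ) (x : Fin n → ℝ) : ℝ :=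
  ∑ i, pd (pd f i) i x

/-- Sum of squares of all second spatial derivatives, `|D²f(x)|²`. -/
def hessSq {n : ℕ} (f : (Fin n → ℝ) → ℝ) (x : Fin n → ℝ) : ℝ :=
  ∑ i, ∑ j, (pd (pd f i) j x) ^ 2

/-- `ℤⁿ`-periodicity of a function on `ℝⁿ`. -/
def ZPer {n : ℕ} (f : (Fin n → ℝ) → ℝ) : Prop :=
  ∀ (x : Fin n → ℝ) (k : Fin n → ℤ), f (x + fun i => (k i : ℝ)) = f x

/-- `i`-th component of `D_pH(x,p)`. -/
def DpH {n : ℕ} (H : (Fin n → ℝ) → (Fin n → ℝ) → ℝ) (x p : Fin n → ℝ) (i : Fin n) : ℝ :=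
  fderiv ℝ (fun q => H x q) p (Pi.single i 1)

/-- `i`-th component of `D_xH(x,p)`. -/
def DxH {n : ℕ} (H : (Fin n → ℝ) → (Fin n → ℝ) → ℝ) (x p : Fin n → ℝ) (i : Fin n) : ℝ :=
  fderiv ℝ (fun y => H y p) x (Pi.single i 1)

/-- `(i,j)` entry of the Hessian in `p`, `D²_{pp}H(x,p)`. -/
def D2pH {n : ℕ} (H : (Fin n → ℝ) → (Fin n → ℝ) → ℝ) (x p : Fin n → ℝ) (i j : Fin n) : ℝ :=
  fderiv ℝ (fun q => DpH H x q i) p (Pi.single j 1)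

/-- Spatial gradient of a time-dependent function. -/
def Dsp {n : ℕ} (w : (Fin n → ℝ) → ℝ → ℝ) (x : Fin n → ℝ) (t : ℝ) : Fin n → ℝ :=
  fun i => pd (fun y => w y t) i x

/-- The unit cube `Q = [0,1]ⁿ`, a fundamental domain for the torus `𝕋ⁿ`. -/
def cube (n : ℕ) : Set (Fin n → ℝ) := Set.Icc 0 1

variable {n : ℕ}

lemma contDiff_pd {f : (Fin n → ℝ) → ℝ} {m : ℕ∞} (hf : ContDiff ℝ (m+1) f) (i : Fin n) :
    ContDiff ℝ m (pd f i) :=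
  (hf.fderiv_right le_rfl).clm_apply contDiff_const

lemma contDiff_pd_top {f : (Fin n → ℝ) → ℝ} (hf : ContDiff ℝ (⊤ : ℕ∞) f) (i : Fin n) :
    ContDiff ℝ (⊤ : ℕ∞) (pd f i) :=
  (hf.fderiv_right (by simp)).clm_apply contDiff_const

lemma clm_eval_eq_sum (L : (Fin n → ℝ) →L[ℝ] ℝ) (ξ : Fin n → ℝ) :
    L ξ = ∑ i, ξ i * L (Pi.single i 1) := by
  have hs : ∀ i : Fin n, (fun j => if i = j then (1:ℝ) else 0) = Pi.single i 1 := by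
    intro i; ext j; rw [Pi.single_apply]; simp [eq_comm]
  conv_lhs => rw [pi_eq_sum_univ ξ]
  rw [map_sum]
  simp only [_root_.map_smul, smul_eq_mul]
  refine Finset.sum_congr rfl fun i _ => ?_
  rw [hs i]

lemma pd_sub {f g : (Fin n → ℝ) → ℝ} {x : Fin n → ℝ} (hf : DifferentiableAt ℝ f x)
    (hg : DifferentiableAt ℝ g x) (i : Fin n) :
    pd (fun y => f y - g y) i x = pd f i x - pd g i x := by
  simp [pd, fderiv_fun_sub hf hg]

lemma pd_mul {f g : (Fin n → ℝ) → ℝ} {x : Fin n → ℝ} (hf : DifferentiableAt ℝ f x)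
    (hg : DifferentiableAt ℝ g x) (i : Fin n) :
    pd (fun y => f y * g y) i x = f x * pd g i x + g x * pd f i x := by
  simp [pd, fderiv_fun_mul hf hg]

lemma ZPer.pdper {f : (Fin n → ℝ) → ℝ} (hper : ZPer f) (hf : Differentiable ℝ f) (i : Fin n) :
    ZPer (pd f i) := by
  intro x k
  have h3 : (fun y : Fin n → ℝ => f (y + fun i => (k i : ℝ))) = f := funext fun y => hper y k
  have htr : HasFDerivAt (fun y : Fin n → ℝ => y + fun i => (k i : ℝ))
      (ContinuousLinearMap.id ℝ (Fin n → ℝ)) x := by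
    exact (hasFDerivAt_id (𝕜 := ℝ) x).add_const (fun i => (k i : ℝ))
  have h4 := (hf (x + fun i => (k i : ℝ))).hasFDerivAt.comp x htr
  have h2 : HasFDerivAt f
      ((fderiv ℝ f (x + fun i => (k i : ℝ))).comp (ContinuousLinearMap.id ℝ (Fin n → ℝ))) x := by
    have h5 : (f ∘ fun y : Fin n → ℝ => y + fun i => (k i : ℝ)) = f := by
      rw [Function.comp_def]; exact h3
    rwa [h5] at h4
  show fderiv ℝ f (x + fun i => (k i : ℝ)) (Pi.single i 1) = fderiv ℝ f x (Pi.single i 1)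
  rw [h2.fderiv]
  simp

lemma ZPer.mul {f g : (Fin n → ℝ) → ℝ} (hf : ZPer f) (hg : ZPer g) :
    ZPer (fun y => f y * g y) := fun x k => by simp [hf x k, hg x k]

lemma ZPer.sub' {f g : (Fin n → ℝ) → ℝ} (hf : ZPer f) (hg : ZPer g) :
    ZPer (fun y => f y - g y) := fun x k => by simp [hf x k, hg x k]

lemma pd_partial {W : (Fin n → ℝ) × ℝ → ℝ} (hW : Differentiable ℝ W) (t : ℝ)
    (x : Fin n → ℝ) (i : Fin n) :
    pd (fun y => W (y, t)) i x = fderiv ℝ W (x, t) (Pi.single i 1, 0) := by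
  have h1 : HasFDerivAt (fun y : Fin n → ℝ => (y, t))
      ((ContinuousLinearMap.id ℝ (Fin n → ℝ)).prod 0) x :=
    (hasFDerivAt_id x).prodMk (hasFDerivAt_const t x)
  have h : HasFDerivAt (fun y => W (y, t))
      ((fderiv ℝ W (x, t)).comp ((ContinuousLinearMap.id ℝ (Fin n → ℝ)).prod 0)) x :=
    (hW (x, t)).hasFDerivAt.comp x h1
  rw [pd, h.fderiv]
  simp

lemma deriv_partial {W : (Fin n → ℝ) × ℝ → ℝ} (hW : Differentiable ℝ W) (x : Fin n → ℝ)
    (t : ℝ) :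
    deriv (fun s => W (x, s)) t = fderiv ℝ W (x, t) (0, 1) := by
  have h1 : HasFDerivAt (fun s : ℝ => (x, s))
      ((0 : ℝ →L[ℝ] (Fin n → ℝ)).prod (ContinuousLinearMap.id ℝ ℝ)) t :=
    (hasFDerivAt_const x t).prodMk (hasFDerivAt_id t)
  have h : HasFDerivAt (fun s : ℝ => W (x, s))
      ((fderiv ℝ W (x, t)).comp ((0 : ℝ →L[ℝ] (Fin n → ℝ)).prod (ContinuousLinearMap.id ℝ ℝ)))
      t := (hW (x, t)).hasFDerivAt.comp t h1
  rw [h.hasDerivAt.deriv]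
  simp

lemma pd2_partial {W : (Fin n → ℝ) × (Fin n → ℝ) → ℝ} (hW : Differentiable ℝ W)
    (x : Fin n → ℝ) (p : Fin n → ℝ) (v : Fin n → ℝ) :
    fderiv ℝ (fun q => W (x, q)) p v = fderiv ℝ W (x, p) (0, v) := by
  have h1 : HasFDerivAt (fun q : Fin n → ℝ => (x, q))
      ((0 : (Fin n → ℝ) →L[ℝ] (Fin n → ℝ)).prod (ContinuousLinearMap.id ℝ (Fin n → ℝ))) p :=
    (hasFDerivAt_const x p).prodMk (hasFDerivAt_id p)
  have h : HasFDerivAt (fun q => W (x, q))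
      ((fderiv ℝ W (x, p)).comp
        ((0 : (Fin n → ℝ) →L[ℝ] (Fin n → ℝ)).prod (ContinuousLinearMap.id ℝ (Fin n → ℝ)))) p :=
    (hW (x, p)).hasFDerivAt.comp p h1
  rw [h.fderiv]
  simp

lemma continuous_pd {f : (Fin n → ℝ) → ℝ} (hf : ContDiff ℝ 1 f) (i : Fin n) :
    Continuous (pd f i) := by
  have hf' : ContDiff ℝ ((0:ℕ∞)+1) f := hf.of_le (by norm_num)
  exact (contDiff_pd hf' i).continuous

lemma insertNth_one_eq {m : ℕ} (i : Fin (m+1)) (x : Fin m → ℝ) :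
    Fin.insertNth i (1:ℝ) x
      = Fin.insertNth i (0:ℝ) x + fun j => ((Pi.single i 1 : Fin (m+1) → ℤ) j : ℝ) := by
  funext j
  refine Fin.succAboveCases i ?_ ?_ j
  · simp
  · intro j'
    simp [Fin.succAbove_ne i j', Pi.single_eq_of_ne (Fin.succAbove_ne i j')]

lemma integral_pd_eq_zero {m : ℕ} {g : (Fin (m+1) → ℝ) → ℝ}
    (hg : ContDiff ℝ 1 g) (hper : ZPer g) (i : Fin (m+1)) :
    ∫ x in cube (m+1), pd g i x = 0 := by
  classical
  set F : Fin (m+1) → (Fin (m+1) → ℝ) → ℝ := fun j => if j = i then g else 0 with hF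
  set F' : Fin (m+1) → (Fin (m+1) → ℝ) → (Fin (m+1) → ℝ) →L[ℝ] ℝ :=
    fun j x => if j = i then fderiv ℝ g x else 0 with hF'
  have hdsum : ∀ x, (∑ j, F' j x (Pi.single j 1)) = pd g i x := by
    intro x
    rw [Finset.sum_eq_single i]
    · simp [hF', pd]
    · intro b _ hb; simp [hF', hb]
    · intro h; exact absurd (Finset.mem_univ i) h
  have key := MeasureTheory.integral_divergence_of_hasFDerivAt_off_countable'
    (a := (0 : Fin (m+1) → ℝ)) (b := (1 : Fin (m+1) → ℝ)) (by norm_num : (0 : Fin (m+1) → ℝ) ≤ 1)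
    F F' ∅ Set.countable_empty
    (fun j => by
      by_cases hj : j = i
      · subst hj; simp only [hF, if_pos rfl]; exact hg.continuous.continuousOn
      · simp only [hF, if_neg hj]; exact continuousOn_const)
    (fun x _ j => by
      by_cases hj : j = i
      · subst hj; simp only [hF, hF', if_pos rfl]
        exact (hg.differentiable one_ne_zero x).hasFDerivAt
      · simp only [hF, hF', if_neg hj]; exact hasFDerivAt_const 0 x)
    (by
      refine (ContinuousOn.integrableOn_compact isCompact_Icc ?_)
      have : Continuous fun x => ∑ j, F' j x (Pi.single j 1) := by
        have : (fun x => ∑ j, F' j x (Pi.single j 1)) = pd g i := funext hdsum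
        rw [this]; exact continuous_pd hg i
      exact this.continuousOn)
  have hlhs : (∫ x in Set.Icc (0:Fin (m+1) → ℝ) 1, ∑ j, F' j x (Pi.single j 1))
      = ∫ x in cube (m+1), pd g i x := by
    refine setIntegral_congr_fun measurableSet_Icc fun x _ => hdsum x
  rw [hlhs] at key
  rw [key]
  refine Finset.sum_eq_zero fun j _ => ?_
  by_cases hj : j = i
  · subst hj
    have : ∀ x : Fin m → ℝ, F j (Fin.insertNth j ((1:Fin (m+1) → ℝ) j) x)
        = F j (Fin.insertNth j ((0:Fin (m+1) → ℝ) j) x) := by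
      intro x
      simp only [hF, if_pos rfl, Pi.one_apply, Pi.zero_apply]
      rw [insertNth_one_eq]
      exact hper _ _
    rw [setIntegral_congr_fun measurableSet_Icc (fun x _ => this x), sub_self]
  · simp [hF, if_neg hj]


lemma integrableOn_cube {f : (Fin n → ℝ) → ℝ} (hf : Continuous f) :
    IntegrableOn f (cube n) :=
  hf.continuousOn.integrableOn_compact isCompact_Icc

lemma cube_measurable : MeasurableSet (cube n) := measurableSet_Icc

lemma integral_pd_mul {m : ℕ} {f g : (Fin (m+1) → ℝ) → ℝ}
    (hf : ContDiff ℝ 1 f) (hg : ContDiff ℝ 1 g) (hfp : ZPer f) (hgp : ZPer g) (i : Fin (m+1)) :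
    ∫ x in cube (m+1), pd f i x * g x = - ∫ x in cube (m+1), f x * pd g i x := by
  have h0 := integral_pd_eq_zero (hf.mul hg) (hfp.mul hgp) i
  have hx : ∀ x, pd (fun y => f y * g y) i x = f x * pd g i x + pd f i x * g x := by
    intro x
    rw [pd_mul (hf.differentiable one_ne_zero x) (hg.differentiable one_ne_zero x) i]
    ring
  rw [setIntegral_congr_fun cube_measurable (fun x _ => hx x)] at h0
  rw [integral_add (integrableOn_cube (f := fun x => f x * pd g i x) (hf.continuous.mul (continuous_pd hg i)))
    (integrableOn_cube (f := fun x => pd f i x * g x) ((continuous_pd hf i).mul hg.continuous))] at h0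
  linarith

lemma contDiff_pd_of_two {f : (Fin n → ℝ) → ℝ} (hf : ContDiff ℝ 2 f) (i : Fin n) :
    ContDiff ℝ 1 (pd f i) := by
  have hf' : ContDiff ℝ ((1:ℕ∞)+1) f := hf.of_le (by norm_num)
  exact contDiff_pd hf' i

lemma contDiff_pd_one_of_top {f : (Fin n → ℝ) → ℝ} (hf : ContDiff ℝ (⊤ : ℕ∞) f) (i : Fin n) :
    ContDiff ℝ 1 (pd f i) := (contDiff_pd_top hf i).of_le (by simp)

lemma integral_mul_lap_symm {m : ℕ} {f g : (Fin (m+1) → ℝ) → ℝ}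
    (hf : ContDiff ℝ 2 f) (hg : ContDiff ℝ (⊤ : ℕ∞) g) (hfp : ZPer f) (hgp : ZPer g) :
    ∫ x in cube (m+1), f x * lap g x = ∫ x in cube (m+1), g x * lap f x := by
  have hfd : Differentiable ℝ f := hf.differentiable two_ne_zero
  have hgd : Differentiable ℝ g := hg.differentiable (by simp)
  have hsplit : ∀ (u v : (Fin (m+1) → ℝ) → ℝ), Continuous u →
      (∀ i : Fin (m+1), Continuous (pd (pd v i) i)) →
      ∫ x in cube (m+1), u x * lap v x = ∑ i, ∫ x in cube (m+1), u x * pd (pd v i) i x := by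
    intro u v hu hv
    simp only [lap, Finset.mul_sum]
    exact integral_finset_sum _ fun i _ => integrableOn_cube (hu.mul (hv i))
  rw [hsplit f g hf.continuous (fun i => (contDiff_pd_top (contDiff_pd_top hg i) i).continuous),
      hsplit g f hg.continuous (fun i => continuous_pd (contDiff_pd_of_two hf i) i)]
  refine Finset.sum_congr rfl fun i _ => ?_
  have h1 : ∫ x in cube (m+1), pd f i x * pd g i x
      = - ∫ x in cube (m+1), f x * pd (pd g i) i x :=
    integral_pd_mul (hf.of_le (by norm_num)) (contDiff_pd_one_of_top hg i)
      hfp (hgp.pdper hgd i) i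
  have h2 : ∫ x in cube (m+1), pd g i x * pd f i x
      = - ∫ x in cube (m+1), g x * pd (pd f i) i x :=
    integral_pd_mul (hg.of_le (by simp)) (contDiff_pd_of_two hf i)
      hgp (hfp.pdper hfd i) i
  have h3 : ∫ x in cube (m+1), pd f i x * pd g i x
      = ∫ x in cube (m+1), pd g i x * pd f i x := by
    refine setIntegral_congr_fun cube_measurable fun x _ => mul_comm _ _
  have := h3 ▸ h1
  linarith [h2, this]


lemma convexity_ineq {θ : ℝ} {H : (Fin n → ℝ) → (Fin n → ℝ) → ℝ}
    (hH : ContDiff ℝ 2 (Function.uncurry H))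
    (hconv : ∀ (x p ξ : Fin n → ℝ),
      2 * θ * (∑ i, ξ i ^ 2) ≤ ∑ i, ∑ j, ξ i * ξ j * D2pH H x p i j)
    (x p q : Fin n → ℝ) :
    H x p + (∑ i, DpH H x p i * (q i - p i)) + θ * (∑ i, (q i - p i) ^ 2) ≤ H x q := by
  classical
  set ξ : Fin n → ℝ := fun i => q i - p i with hξ
  have hGc : ContDiff ℝ 2 (fun r => H x r) := by
    exact hH.comp ((contDiff_const (c := x)).prodMk contDiff_id)
  have hGd : Differentiable ℝ (fun r => H x r) := hGc.differentiable two_ne_zero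
  have hline : ∀ s : ℝ, HasDerivAt (fun s : ℝ => p + s • ξ) ξ s := by
    intro s
    simpa using ((hasDerivAt_id s).smul_const ξ).const_add p
  have hφ : ∀ s : ℝ, HasDerivAt (fun s => H x (p + s • ξ))
      (∑ i, ξ i * DpH H x (p + s • ξ) i) s := by
    intro s
    have h := (hGd (p + s • ξ)).hasFDerivAt.comp_hasDerivAt s (hline s)
    have hval : fderiv ℝ (fun r => H x r) (p + s • ξ) ξ
        = ∑ i, ξ i * DpH H x (p + s • ξ) i := by
      rw [clm_eval_eq_sum]; rfl
    rwa [hval] at h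
  have hDc : ∀ i : Fin n, ContDiff ℝ 1 (fun r => DpH H x r i) := fun i =>
    (hGc.fderiv_right (by norm_num)).clm_apply contDiff_const
  have hψ : ∀ (i : Fin n) (s : ℝ), HasDerivAt (fun s => DpH H x (p + s • ξ) i)
      (∑ j, ξ j * D2pH H x (p + s • ξ) i j) s := by
    intro i s
    have h := ((hDc i).differentiable one_ne_zero (p + s • ξ)).hasFDerivAt.comp_hasDerivAt s (hline s)
    have hval : fderiv ℝ (fun r => DpH H x r i) (p + s • ξ) ξ
        = ∑ j, ξ j * D2pH H x (p + s • ξ) i j := by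
      rw [clm_eval_eq_sum]; rfl
    rwa [hval] at h
  set A := ∑ i, ξ i ^ 2 with hA
  set B := ∑ i, ξ i * DpH H x p i with hB
  set g1 : ℝ → ℝ := fun s => (∑ i, ξ i * DpH H x (p + s • ξ) i) - B - 2 * θ * s * A with hg1
  have hg1' : ∀ s, HasDerivAt g1
      ((∑ i, ξ i * ∑ j, ξ j * D2pH H x (p + s • ξ) i j) - 2 * θ * A) s := by
    intro s
    have h1 : HasDerivAt (fun s => ∑ i, ξ i * DpH H x (p + s • ξ) i)
        (∑ i, ξ i * ∑ j, ξ j * D2pH H x (p + s • ξ) i j) s := by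
      refine HasDerivAt.fun_sum fun i _ => ?_
      have := (hψ i s).const_mul (ξ i)
      simpa [Finset.mul_sum] using this
    have h2 : HasDerivAt (fun s : ℝ => B + 2 * θ * s * A) (2 * θ * A) s := by
      have : HasDerivAt (fun s : ℝ => 2 * θ * s * A) (2 * θ * A) s := by
        have h := ((hasDerivAt_id s).const_mul (2*θ)).mul_const A
        simpa using h
      simpa using this.const_add B
    have h3 : HasDerivAt (fun s => (∑ i, ξ i * DpH H x (p + s • ξ) i) - (B + 2 * θ * s * A))
        ((∑ i, ξ i * ∑ j, ξ j * D2pH H x (p + s • ξ) i j) - 2 * θ * A) s := h1.sub h2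
    convert h3 using 2
    simp only [hg1]
    ring
  have hg1'nn : ∀ s : ℝ, 0 ≤ (∑ i, ξ i * ∑ j, ξ j * D2pH H x (p + s • ξ) i j) - 2 * θ * A := by
    intro s
    have hc := hconv x (p + s • ξ) ξ
    have heq : ∑ i, ξ i * ∑ j, ξ j * D2pH H x (p + s • ξ) i j
        = ∑ i, ∑ j, ξ i * ξ j * D2pH H x (p + s • ξ) i j := by
      refine Finset.sum_congr rfl fun i _ => ?_
      rw [Finset.mul_sum]
      exact Finset.sum_congr rfl fun j _ => by ring
    rw [heq]; rw [hA]; linarith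
  have hg1mono : Monotone g1 :=
    monotone_of_deriv_nonneg (fun s => (hg1' s).differentiableAt)
      (fun s => by rw [(hg1' s).deriv]; exact hg1'nn s)
  have hg10 : g1 0 = 0 := by simp [hg1, hB]
  have hg1nn : ∀ s : ℝ, 0 ≤ s → 0 ≤ g1 s := fun s hs => by
    have := hg1mono hs
    rwa [hg10] at this
  set g : ℝ → ℝ := fun s => H x (p + s • ξ) - H x p - s * B - θ * s ^ 2 * A with hg
  have hg' : ∀ s, HasDerivAt g (g1 s) s := by
    intro s
    have ha : HasDerivAt (fun s : ℝ => s * B) B s := by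
      simpa using (hasDerivAt_id s).mul_const B
    have hb : HasDerivAt (fun s : ℝ => θ * s ^ 2 * A) (θ * (2 * s) * A) s := by
      have h : HasDerivAt (fun s : ℝ => θ * s ^ 2 * A) (θ * (((2:ℕ):ℝ) * s ^ (2 - 1)) * A) s :=
        ((hasDerivAt_pow 2 s).const_mul θ).mul_const A
      convert h using 1
      push_cast
      ring
    have h3 := (((hφ s).sub_const (H x p)).sub ha).sub hb
    have h4 : g1 s = ∑ i, ξ i * DpH H x (p + s • ξ) i - B - θ * (2 * s) * A := by
      simp only [hg1]; ring
    rw [h4]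
    exact h3
  have hgmono : MonotoneOn g (Set.Icc (0:ℝ) 1) := by
    refine monotoneOn_of_deriv_nonneg (convex_Icc 0 1)
      (fun s _ => ((hg' s).differentiableAt).continuousAt.continuousWithinAt)
      (fun s _ => ((hg' s).differentiableAt).differentiableWithinAt) ?_
    intro s hs
    rw [interior_Icc] at hs
    rw [(hg' s).deriv]
    exact hg1nn s hs.1.le
  have hg0 : g 0 = 0 := by simp [hg]
  have hg1le : g 0 ≤ g 1 := hgmono (Set.left_mem_Icc.2 zero_le_one)
    (Set.right_mem_Icc.2 zero_le_one) zero_le_one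
  rw [hg0] at hg1le
  have hq : p + ξ = q := by
    funext i
    simp only [Pi.add_apply, hξ]
    ring
  have hgval : g 1 = H x q - H x p - B - θ * A := by
    simp [hg, hq]
  rw [hgval] at hg1le
  have hBeq : B = ∑ i, DpH H x p i * (q i - p i) := by
    rw [hB]
    exact Finset.sum_congr rfl fun i _ => by rw [hξ]; ring
  rw [hBeq] at hg1le
  linarith


lemma ZPer.addconst {f : (Fin n → ℝ) → ℝ} (hf : ZPer f) (c : ℝ) :
    ZPer (fun y => f y + c) := fun x k => by simp [hf x k]

lemma lap_sub {f g : (Fin n → ℝ) → ℝ} (hf : ContDiff ℝ (⊤ : ℕ∞) f) (hg : ContDiff ℝ (⊤ : ℕ∞) g)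
    (x : Fin n → ℝ) : lap (fun y => f y - g y) x = lap f x - lap g x := by
  have hfd : Differentiable ℝ f := hf.differentiable (by simp)
  have hgd : Differentiable ℝ g := hg.differentiable (by simp)
  unfold lap
  rw [← Finset.sum_sub_distrib]
  refine Finset.sum_congr rfl fun i _ => ?_
  have h1 : pd (fun y => f y - g y) i = fun y => pd f i y - pd g i y :=
    funext fun y => pd_sub (hfd y) (hgd y) i
  rw [h1, pd_sub ((contDiff_pd_top hf i).differentiable (by simp) x)
    ((contDiff_pd_top hg i).differentiable (by simp) x) i]

theorem stmt_7 {n : ℕ} (θ C₀ M : ℝ) (hθ : 0 < θ) (hC₀ : 0 < C₀) (hM : 0 < M)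
    (H : (Fin n → ℝ) → (Fin n → ℝ) → ℝ)
    (hH : ContDiff ℝ 2 (Function.uncurry H))
    (hHper : ∀ p, ZPer (fun x => H x p))
    (hconv : ∀ (x p ξ : Fin n → ℝ),
      2 * θ * (∑ i, ξ i ^ 2) ≤ ∑ i, ∑ j, ξ i * ξ j * D2pH H x p i j)
    (hDx : ∀ x p, Real.sqrt (∑ i, (DxH H x p i) ^ 2) ≤ C₀ * (1 + ∑ i, (p i) ^ 2))
    (a : (Fin n → ℝ) → ℝ) (ha : ContDiff ℝ 2 a) (haper : ZPer a) (hann : ∀ x, 0 ≤ a x) :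
    ∃ C > 0, ∀ ε : ℝ, ε ∈ Set.Ioc (0:ℝ) 1 →
      ∀ (w : (Fin n → ℝ) → ℝ → ℝ) (v : (Fin n → ℝ) → ℝ)
        (σ : (Fin n → ℝ) → ℝ → ℝ) (Hbar : ℝ),
      ContDiff ℝ (⊤ : ℕ∞) (fun q : (Fin n → ℝ) × ℝ => w q.1 q.2) →
      (∀ t : ℝ, ZPer (fun y => w y t)) →
      (∀ (x : Fin n → ℝ), ∀ t ∈ Set.Icc (0:ℝ) 1,
        ε * deriv (w x) t + H x (Dsp w x t) = (a x + ε ^ 4) * lap (fun y => w y t) x) →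
      ContDiff ℝ (⊤ : ℕ∞) v → ZPer v →
      (∀ x, H x (fun i => pd v i x) = (a x + ε ^ 4) * lap v x + Hbar) →
      ContDiff ℝ (⊤ : ℕ∞) (fun q : (Fin n → ℝ) × ℝ => σ q.1 q.2) →
      (∀ t : ℝ, ZPer (fun y => σ y t)) →
      (∀ (x : Fin n → ℝ), ∀ t ∈ Set.Icc (0:ℝ) 1, 0 ≤ σ x t) →
      (∀ (x : Fin n → ℝ), ∀ t ∈ Set.Icc (0:ℝ) 1,
        -(ε * deriv (σ x) t) - (∑ i, pd (fun y => DpH H y (Dsp w y t) i * σ y t) i x)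
          = lap (fun y => (a y + ε ^ 4) * σ y t) x) →
      (∀ t ∈ Set.Icc (0:ℝ) 1, (∫ x in cube n, σ x t) = 1) →
      (∀ (x : Fin n → ℝ), ∀ t ∈ Set.Icc (0:ℝ) 1, |w x t| ≤ M) →
      (∀ x, |v x| ≤ M) →
      |Hbar| ≤ M * ε ^ 2 →
      (∫ t in Set.Icc (0:ℝ) 1, ∫ x in cube n,
          gradSq (fun y => w y t - v y) x * σ x t) ≤ C * ε := by
  obtain _ | m := n
  · refine ⟨1, one_pos, ?_⟩
    rintro ε ⟨hε0, hε1⟩ w v σ Hbar _ _ _ _ _ _ _ _ _ _ _ _ _ _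
    have h0 : ∀ (t : ℝ) (x : Fin 0 → ℝ), gradSq (fun y => w y t - v y) x * σ x t = 0 := by
      intro t x; simp [gradSq]
    simp only [h0, integral_zero]
    positivity
  refine ⟨5 * M / θ + 1, by positivity, ?_⟩
  rintro ε ⟨hε0, hε1⟩ w v σ Hbar hWsm hwper hweq hvsm hvper hveq hSsm hσper hσnn hadj hmass hwM hvM hbM
  set I01 : Set ℝ := Set.Icc (0:ℝ) 1 with hI01
  have hwt : ∀ t : ℝ, ContDiff ℝ (⊤ : ℕ∞) (fun y => w y t) := fun t =>
    hWsm.comp (contDiff_id.prodMk contDiff_const)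
  have hst : ∀ t : ℝ, ContDiff ℝ (⊤ : ℕ∞) (fun y => σ y t) := fun t =>
    hSsm.comp (contDiff_id.prodMk contDiff_const)
  have hWd : Differentiable ℝ (fun q : (Fin (m+1) → ℝ) × ℝ => w q.1 q.2) :=
    hWsm.differentiable (by simp)
  have hSd : Differentiable ℝ (fun q : (Fin (m+1) → ℝ) × ℝ => σ q.1 q.2) :=
    hSsm.differentiable (by simp)
  have hut : ∀ t : ℝ, ContDiff ℝ (⊤ : ℕ∞) (fun y => w y t - v y) := fun t => (hwt t).sub hvsm
  have hutper : ∀ t : ℝ, ZPer (fun y => w y t - v y) := fun t => (hwper t).sub' hvper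
  have hpdu_cont : ∀ (t : ℝ) (i : Fin (m+1)), Continuous (pd (fun y => w y t - v y) i) :=
    fun t i => (contDiff_pd_top (hut t) i).continuous
  -- representation of time derivatives
  have hwt'rep : ∀ (x : Fin (m+1) → ℝ) (t : ℝ), deriv (w x) t
      = fderiv ℝ (fun q : (Fin (m+1) → ℝ) × ℝ => w q.1 q.2) (x, t) (0, 1) := fun x t =>
    deriv_partial hWd x t
  have hst'rep : ∀ (x : Fin (m+1) → ℝ) (t : ℝ), deriv (σ x) t
      = fderiv ℝ (fun q : (Fin (m+1) → ℝ) × ℝ => σ q.1 q.2) (x, t) (0, 1) := fun x t =>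
    deriv_partial hSd x t
  have hWfc : Continuous (fun q : (Fin (m+1) → ℝ) × ℝ =>
      fderiv ℝ (fun q : (Fin (m+1) → ℝ) × ℝ => w q.1 q.2) q (0, 1)) :=
    ((hWsm.fderiv_right (m := (⊤ : ℕ∞)) (by simp)).clm_apply contDiff_const).continuous
  have hSfc : Continuous (fun q : (Fin (m+1) → ℝ) × ℝ =>
      fderiv ℝ (fun q : (Fin (m+1) → ℝ) × ℝ => σ q.1 q.2) q (0, 1)) :=
    ((hSsm.fderiv_right (m := (⊤ : ℕ∞)) (by simp)).clm_apply contDiff_const).continuous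
  have hwt'c : ∀ t : ℝ, Continuous (fun x => deriv (w x) t) := by
    intro t
    have he : (fun x => deriv (w x) t) = fun x =>
        fderiv ℝ (fun q : (Fin (m+1) → ℝ) × ℝ => w q.1 q.2) (x, t) (0, 1) :=
      funext fun x => hwt'rep x t
    rw [he]
    exact hWfc.comp (continuous_id.prodMk continuous_const)
  have hst'c : ∀ t : ℝ, Continuous (fun x => deriv (σ x) t) := by
    intro t
    have he : (fun x => deriv (σ x) t) = fun x =>
        fderiv ℝ (fun q : (Fin (m+1) → ℝ) × ℝ => σ q.1 q.2) (x, t) (0, 1) :=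
      funext fun x => hst'rep x t
    rw [he]
    exact hSfc.comp (continuous_id.prodMk continuous_const)
  -- DpH smoothness/periodicity
  have hHd : Differentiable ℝ (Function.uncurry H) := hH.differentiable two_ne_zero
  have hDsp : ∀ t : ℝ, ContDiff ℝ (⊤ : ℕ∞) (fun y => Dsp w y t) := fun t =>
    contDiff_pi.2 fun i => contDiff_pd_top (hwt t) i
  have hDpHc1 : ∀ (t : ℝ) (i : Fin (m+1)), ContDiff ℝ 1 (fun y => DpH H y (Dsp w y t) i) := by
    intro t i
    have h1 : (fun y => DpH H y (Dsp w y t) i)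
        = fun y => fderiv ℝ (Function.uncurry H) (y, Dsp w y t) (0, Pi.single i 1) :=
      funext fun y => pd2_partial hHd y _ _
    rw [h1]
    exact ((hH.fderiv_right (m := 1) (by norm_num)).clm_apply contDiff_const).comp
      (contDiff_id.prodMk ((hDsp t).of_le (by simp)))
  have hFc : ∀ (t : ℝ) (i : Fin (m+1)),
      ContDiff ℝ 1 (fun y => DpH H y (Dsp w y t) i * σ y t) := fun t i =>
    (hDpHc1 t i).mul ((hst t).of_le (by simp))
  have hFper : ∀ (t : ℝ) (i : Fin (m+1)), ZPer (fun y => DpH H y (Dsp w y t) i * σ y t) := by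
    intro t i x k
    have h1 : Dsp w (x + fun j => (k j : ℝ)) t = Dsp w x t :=
      funext fun j => (hwper t).pdper ((hwt t).differentiable (by simp)) j x k
    have h2 : DpH H (x + fun j => (k j : ℝ)) (Dsp w x t) i = DpH H x (Dsp w x t) i := by
      unfold DpH
      rw [show (fun q => H (x + fun j => (k j : ℝ)) q) = fun q => H x q from
        funext fun q => hHper q x k]
    show DpH H (x + fun j => (k j : ℝ)) (Dsp w (x + fun j => (k j : ℝ)) t) i
        * σ (x + fun j => (k j : ℝ)) t = _
    rw [h1, h2]
    exact congrArg (fun r => DpH H x (Dsp w x t) i * r) (hσper t x k)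
  have hbc : ∀ t : ℝ, ContDiff ℝ 2 (fun y => (a y + ε ^ 4) * σ y t) := fun t =>
    (ha.add contDiff_const).mul ((hst t).of_le (WithTop.coe_le_coe.2 le_top))
  have hbper : ∀ t : ℝ, ZPer (fun y => (a y + ε ^ 4) * σ y t) := fun t =>
    (haper.addconst (ε ^ 4)).mul (hσper t)
  -- THE SPACE STEP
  have key : ∀ t ∈ I01, θ * ∫ x in cube (m+1), gradSq (fun y => w y t - v y) x * σ x t
      ≤ (∫ x in cube (m+1),
          ((w x t - v x) * (ε * deriv (σ x) t) + ε * deriv (w x) t * σ x t)) + Hbar := by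
    intro t ht
    -- continuity facts
    have hcu : Continuous (fun x => w x t - v x) := ((hwt t).continuous).sub hvsm.continuous
    have hcσ : Continuous (fun x => σ x t) := (hst t).continuous
    have hcw' : Continuous (fun x => deriv (w x) t) := hwt'c t
    have hcσ' : Continuous (fun x => deriv (σ x) t) := hst'c t
    have hcgs : Continuous (fun x => gradSq (fun y => w y t - v y) x) :=
      continuous_finset_sum _ fun i _ => (hpdu_cont t i).pow 2
    have hclapu : Continuous (fun x => lap (fun y => w y t - v y) x) :=
      continuous_finset_sum _ fun i _ =>
        (contDiff_pd_top (contDiff_pd_top (hut t) i) i).continuous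
    have hcDpH : ∀ i : Fin (m+1), Continuous (fun x => DpH H x (Dsp w x t) i) := fun i =>
      (hDpHc1 t i).continuous
    have hclapb : Continuous (fun x => lap (fun y => (a y + ε ^ 4) * σ y t) x) :=
      continuous_finset_sum _ fun i _ => continuous_pd (contDiff_pd_of_two (hbc t) i) i
    have hcpdF : ∀ i : Fin (m+1),
        Continuous (pd (fun y => DpH H y (Dsp w y t) i * σ y t) i) := fun i =>
      continuous_pd (hFc t i) i
    -- pointwise inequality from convexity and the two PDEs
    have hpt : ∀ x, θ * (gradSq (fun y => w y t - v y) x * σ x t)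
        ≤ ((∑ i, DpH H x (Dsp w x t) i * pd (fun y => w y t - v y) i x)
            - (a x + ε ^ 4) * lap (fun y => w y t - v y) x
            + Hbar + ε * deriv (w x) t) * σ x t := by
      intro x
      have hcv := convexity_ineq hH hconv x (Dsp w x t) (fun i => pd v i x)
      have hpd : ∀ i : Fin (m+1), pd (fun y => w y t - v y) i x
          = Dsp w x t i - pd v i x := fun i =>
        pd_sub (((hwt t).differentiable (by simp)) x) ((hvsm.differentiable (by simp)) x) i
      have hgs : gradSq (fun y => w y t - v y) x
          = ∑ i, ((fun i => pd v i x) i - Dsp w x t i) ^ 2 := by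
        refine Finset.sum_congr rfl fun i _ => ?_
        rw [hpd i]
        ring
      have hsum : (∑ i, DpH H x (Dsp w x t) i * ((fun i => pd v i x) i - Dsp w x t i))
          = - ∑ i, DpH H x (Dsp w x t) i * pd (fun y => w y t - v y) i x := by
        rw [← Finset.sum_neg_distrib]
        refine Finset.sum_congr rfl fun i _ => ?_
        rw [hpd i]
        ring
      have hlap : lap (fun y => w y t - v y) x
          = lap (fun y => w y t) x - lap v x := lap_sub (hwt t) hvsm x
      have hw' := hweq x t ht
      have hv' := hveq x
      have hcore : θ * gradSq (fun y => w y t - v y) x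
          ≤ (∑ i, DpH H x (Dsp w x t) i * pd (fun y => w y t - v y) i x)
            - (a x + ε ^ 4) * lap (fun y => w y t - v y) x + Hbar + ε * deriv (w x) t := by
        rw [hgs, hlap]
        rw [hsum] at hcv
        linarith
      have := mul_le_mul_of_nonneg_right hcore (hσnn x t ht)
      calc θ * (gradSq (fun y => w y t - v y) x * σ x t)
          = (θ * gradSq (fun y => w y t - v y) x) * σ x t := by ring
        _ ≤ _ := this
    -- integrate the pointwise inequality
    have hintL : IntegrableOn (fun x => θ * (gradSq (fun y => w y t - v y) x * σ x t))
        (cube (m+1)) := integrableOn_cube (continuous_const.mul (hcgs.mul hcσ))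
    have hcR : Continuous (fun x => ((∑ i, DpH H x (Dsp w x t) i
          * pd (fun y => w y t - v y) i x)
          - (a x + ε ^ 4) * lap (fun y => w y t - v y) x
          + Hbar + ε * deriv (w x) t) * σ x t) := by
      refine Continuous.mul ?_ hcσ
      refine Continuous.add (Continuous.add (Continuous.sub ?_ ?_) continuous_const) ?_
      · exact continuous_finset_sum _ fun i _ => (hcDpH i).mul (hpdu_cont t i)
      · exact ((ha.continuous.add continuous_const).mul hclapu)
      · exact continuous_const.mul hcw'
    have hintR : IntegrableOn (fun x => ((∑ i, DpH H x (Dsp w x t) i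
          * pd (fun y => w y t - v y) i x)
          - (a x + ε ^ 4) * lap (fun y => w y t - v y) x
          + Hbar + ε * deriv (w x) t) * σ x t) (cube (m+1)) := integrableOn_cube hcR
    have hle1 := setIntegral_mono_on hintL hintR cube_measurable (fun x _ => hpt x)
    rw [integral_const_mul θ] at hle1
    refine le_trans hle1 (le_of_eq ?_)
    -- now compute the right-hand side exactly
    -- split into four integrals
    have hsplit4 : (∫ x in cube (m+1), ((∑ i, DpH H x (Dsp w x t) i
          * pd (fun y => w y t - v y) i x)
          - (a x + ε ^ 4) * lap (fun y => w y t - v y) x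
          + Hbar + ε * deriv (w x) t) * σ x t)
        = (∫ x in cube (m+1), ∑ i, pd (fun y => w y t - v y) i x
            * (DpH H x (Dsp w x t) i * σ x t))
          + (∫ x in cube (m+1), ((a x + ε ^ 4) * σ x t) * (- lap (fun y => w y t - v y) x))
          + (∫ x in cube (m+1), Hbar * σ x t)
          + (∫ x in cube (m+1), ε * deriv (w x) t * σ x t) := by
      rw [← integral_add (integrableOn_cube ?c1) (integrableOn_cube ?c2),
          ← integral_add (integrableOn_cube ?c3) (integrableOn_cube ?c4),
          ← integral_add (integrableOn_cube ?c5) (integrableOn_cube ?c6)]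
      case c1 =>
        exact continuous_finset_sum _ fun i _ =>
          (hpdu_cont t i).mul ((hcDpH i).mul hcσ)
      case c2 =>
        exact ((ha.continuous.add continuous_const).mul hcσ).mul hclapu.neg
      case c3 =>
        exact (continuous_finset_sum _ fun i _ => (hpdu_cont t i).mul ((hcDpH i).mul hcσ)).add
          (((ha.continuous.add continuous_const).mul hcσ).mul hclapu.neg)
      case c4 => exact continuous_const.mul hcσ
      case c5 =>
        exact ((continuous_finset_sum _ fun i _ =>
          (hpdu_cont t i).mul ((hcDpH i).mul hcσ)).add
          (((ha.continuous.add continuous_const).mul hcσ).mul hclapu.neg)).add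
          (continuous_const.mul hcσ)
      case c6 => exact (continuous_const.mul hcw').mul hcσ
      refine setIntegral_congr_fun cube_measurable fun x _ => ?_
      have hs : (∑ i, pd (fun y => w y t - v y) i x * (DpH H x (Dsp w x t) i * σ x t))
          = (∑ i, DpH H x (Dsp w x t) i * pd (fun y => w y t - v y) i x) * σ x t := by
        rw [Finset.sum_mul]
        exact Finset.sum_congr rfl fun i _ => by ring
      rw [hs]
      ring
    rw [hsplit4]
    -- first piece: IBP
    have hIBP1 : (∫ x in cube (m+1), ∑ i, pd (fun y => w y t - v y) i x
          * (DpH H x (Dsp w x t) i * σ x t))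
        = - ∫ x in cube (m+1), (w x t - v x)
            * ∑ i, pd (fun y => DpH H y (Dsp w y t) i * σ y t) i x := by
      rw [integral_finset_sum _ fun i _ => integrableOn_cube
        (f := fun x => pd (fun y => w y t - v y) i x * (DpH H x (Dsp w x t) i * σ x t)) ((hpdu_cont t i).mul ((hcDpH i).mul hcσ))]
      have hterm : ∀ i : Fin (m+1), (∫ x in cube (m+1), pd (fun y => w y t - v y) i x
            * (DpH H x (Dsp w x t) i * σ x t))
          = - ∫ x in cube (m+1), (w x t - v x)
              * pd (fun y => DpH H y (Dsp w y t) i * σ y t) i x := fun i =>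
        integral_pd_mul ((hut t).of_le (by simp)) (hFc t i) (hutper t) (hFper t i) i
      rw [Finset.sum_congr rfl fun i _ => hterm i, Finset.sum_neg_distrib,
        ← integral_finset_sum _ fun i _ => integrableOn_cube
          (f := fun x => (w x t - v x) * pd (fun y => DpH H y (Dsp w y t) i * σ y t) i x) (hcu.mul (hcpdF i))]
      congr 1
      refine setIntegral_congr_fun cube_measurable fun x _ => ?_
      rw [Finset.mul_sum]
    -- second piece: double IBP
    have hIBP2 : (∫ x in cube (m+1), ((a x + ε ^ 4) * σ x t)
          * (- lap (fun y => w y t - v y) x))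
        = - ∫ x in cube (m+1), (w x t - v x)
            * lap (fun y => (a y + ε ^ 4) * σ y t) x := by
      have h1 : (∫ x in cube (m+1), ((a x + ε ^ 4) * σ x t)
            * (- lap (fun y => w y t - v y) x))
          = - ∫ x in cube (m+1), ((a x + ε ^ 4) * σ x t)
              * lap (fun y => w y t - v y) x := by
        rw [← integral_neg]
        refine setIntegral_congr_fun cube_measurable fun x _ => ?_
        ring
      rw [h1, integral_mul_lap_symm (hbc t) (hut t) (hbper t) (hutper t)]
    rw [hIBP1, hIBP2]
    -- adjoint equation
    have hcomb : (- ∫ x in cube (m+1), (w x t - v x)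
            * ∑ i, pd (fun y => DpH H y (Dsp w y t) i * σ y t) i x)
          + (- ∫ x in cube (m+1), (w x t - v x)
            * lap (fun y => (a y + ε ^ 4) * σ y t) x)
        = ∫ x in cube (m+1), (w x t - v x) * (ε * deriv (σ x) t) := by
      rw [← neg_add, ← integral_add
        (integrableOn_cube (f := fun x => (w x t - v x)
            * ∑ i, pd (fun y => DpH H y (Dsp w y t) i * σ y t) i x)
          (hcu.mul (continuous_finset_sum _ fun i _ => hcpdF i)))
        (integrableOn_cube (f := fun x => (w x t - v x) * lap (fun y => (a y + ε ^ 4) * σ y t) x)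
          (hcu.mul hclapb)), ← integral_neg]
      refine setIntegral_congr_fun cube_measurable fun x _ => ?_
      have hx := hadj x t ht
      have : (∑ i, pd (fun y => DpH H y (Dsp w y t) i * σ y t) i x)
          + lap (fun y => (a y + ε ^ 4) * σ y t) x = -(ε * deriv (σ x) t) := by linarith
      calc -((w x t - v x) * ∑ i, pd (fun y => DpH H y (Dsp w y t) i * σ y t) i x
            + (w x t - v x) * lap (fun y => (a y + ε ^ 4) * σ y t) x)
          = (w x t - v x) * (-((∑ i, pd (fun y => DpH H y (Dsp w y t) i * σ y t) i x)
              + lap (fun y => (a y + ε ^ 4) * σ y t) x)) := by ring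
        _ = (w x t - v x) * (ε * deriv (σ x) t) := by rw [this]; ring
    have hmassT : (∫ x in cube (m+1), Hbar * σ x t) = Hbar := by
      rw [integral_const_mul, hmass t ht, mul_one]
    calc (- ∫ x in cube (m+1), (w x t - v x)
            * ∑ i, pd (fun y => DpH H y (Dsp w y t) i * σ y t) i x)
          + (- ∫ x in cube (m+1), (w x t - v x)
            * lap (fun y => (a y + ε ^ 4) * σ y t) x)
          + (∫ x in cube (m+1), Hbar * σ x t)
          + (∫ x in cube (m+1), ε * deriv (w x) t * σ x t)
        = (∫ x in cube (m+1), (w x t - v x) * (ε * deriv (σ x) t))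
          + (∫ x in cube (m+1), ε * deriv (w x) t * σ x t) + Hbar := by
          rw [← hcomb, hmassT]; ring
      _ = (∫ x in cube (m+1),
            ((w x t - v x) * (ε * deriv (σ x) t) + ε * deriv (w x) t * σ x t)) + Hbar := by
          rw [← integral_add (integrableOn_cube (f := fun x => (w x t - v x) * (ε * deriv (σ x) t))
              (hcu.mul (continuous_const.mul hcσ')))
            (integrableOn_cube (f := fun x => ε * deriv (w x) t * σ x t)
              ((continuous_const.mul hcw').mul hcσ))]
  -- joint continuity of the two integrands
  have hG2cont : Continuous (fun q : ℝ × (Fin (m+1) → ℝ) =>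
      gradSq (fun y => w y q.1 - v y) q.2 * σ q.2 q.1) := by
    have hrep : ∀ (t : ℝ) (x : Fin (m+1) → ℝ), gradSq (fun y => w y t - v y) x
        = ∑ i, (fderiv ℝ (fun q : (Fin (m+1) → ℝ) × ℝ => w q.1 q.2) (x, t) (Pi.single i 1, 0)
            - pd v i x) ^ 2 := by
      intro t x
      refine Finset.sum_congr rfl fun i _ => ?_
      rw [pd_sub (((hwt t).differentiable (by simp)) x) ((hvsm.differentiable (by simp)) x) i,
        pd_partial hWd t x i]
    have : (fun q : ℝ × (Fin (m+1) → ℝ) => gradSq (fun y => w y q.1 - v y) q.2 * σ q.2 q.1)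
        = fun q : ℝ × (Fin (m+1) → ℝ) =>
          (∑ i, (fderiv ℝ (fun q : (Fin (m+1) → ℝ) × ℝ => w q.1 q.2) (q.2, q.1)
              (Pi.single i 1, 0) - pd v i q.2) ^ 2) * σ q.2 q.1 := by
      funext q
      rw [hrep q.1 q.2]
    rw [this]
    have hswap : Continuous (fun q : ℝ × (Fin (m+1) → ℝ) => (q.2, q.1)) :=
      continuous_snd.prodMk continuous_fst
    refine Continuous.mul ?_ (hSsm.continuous.comp hswap)
    refine continuous_finset_sum _ fun i _ => ?_
    refine Continuous.pow ?_ 2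
    refine Continuous.sub ?_ ((contDiff_pd_top hvsm i).continuous.comp continuous_snd)
    exact (((hWsm.fderiv_right (m := (⊤ : ℕ∞)) (by simp)).clm_apply contDiff_const).continuous).comp hswap
  have hR2cont : Continuous (fun q : ℝ × (Fin (m+1) → ℝ) =>
      ((w q.2 q.1 - v q.2) * (ε * deriv (σ q.2) q.1) + ε * deriv (w q.2) q.1 * σ q.2 q.1)) := by
    have hswap : Continuous (fun q : ℝ × (Fin (m+1) → ℝ) => (q.2, q.1)) :=
      continuous_snd.prodMk continuous_fst
    have hwc : Continuous (fun q : ℝ × (Fin (m+1) → ℝ) => w q.2 q.1) :=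
      hWsm.continuous.comp hswap
    have hsc : Continuous (fun q : ℝ × (Fin (m+1) → ℝ) => σ q.2 q.1) :=
      hSsm.continuous.comp hswap
    have hdw : Continuous (fun q : ℝ × (Fin (m+1) → ℝ) => deriv (w q.2) q.1) := by
      have he : (fun q : ℝ × (Fin (m+1) → ℝ) => deriv (w q.2) q.1) = fun q =>
          fderiv ℝ (fun q : (Fin (m+1) → ℝ) × ℝ => w q.1 q.2) (q.2, q.1) (0, 1) :=
        funext fun q => hwt'rep q.2 q.1
      rw [he]; exact hWfc.comp hswap
    have hds : Continuous (fun q : ℝ × (Fin (m+1) → ℝ) => deriv (σ q.2) q.1) := by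
      have he : (fun q : ℝ × (Fin (m+1) → ℝ) => deriv (σ q.2) q.1) = fun q =>
          fderiv ℝ (fun q : (Fin (m+1) → ℝ) × ℝ => σ q.1 q.2) (q.2, q.1) (0, 1) :=
        funext fun q => hst'rep q.2 q.1
      rw [he]; exact hSfc.comp hswap
    exact ((hwc.sub (hvsm.continuous.comp continuous_snd)).mul (continuous_const.mul hds)).add
      ((continuous_const.mul hdw).mul hsc)
  -- product integrability
  have hcompact : IsCompact (I01 ×ˢ cube (m+1)) := isCompact_Icc.prod isCompact_Icc
  have hmeasI : MeasurableSet I01 := measurableSet_Icc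
  have hG2int : Integrable (fun q : ℝ × (Fin (m+1) → ℝ) =>
      gradSq (fun y => w y q.1 - v y) q.2 * σ q.2 q.1)
      ((volume.restrict I01).prod (volume.restrict (cube (m+1)))) := by
    rw [Measure.prod_restrict]
    exact hG2cont.continuousOn.integrableOn_compact hcompact
  have hR2int : Integrable (fun q : ℝ × (Fin (m+1) → ℝ) =>
      ((w q.2 q.1 - v q.2) * (ε * deriv (σ q.2) q.1) + ε * deriv (w q.2) q.1 * σ q.2 q.1))
      ((volume.restrict I01).prod (volume.restrict (cube (m+1)))) := by
    rw [Measure.prod_restrict]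
    exact hR2cont.continuousOn.integrableOn_compact hcompact
  have hGt_int : Integrable (fun t => ∫ x in cube (m+1),
      gradSq (fun y => w y t - v y) x * σ x t) (volume.restrict I01) := hG2int.integral_prod_left
  have hRt_int : Integrable (fun t => ∫ x in cube (m+1),
      ((w x t - v x) * (ε * deriv (σ x) t) + ε * deriv (w x) t * σ x t))
      (volume.restrict I01) := hR2int.integral_prod_left
  -- Fubini
  have hswapint : (∫ t in I01, ∫ x in cube (m+1),
      ((w x t - v x) * (ε * deriv (σ x) t) + ε * deriv (w x) t * σ x t))
      = ∫ x in cube (m+1), ∫ t in I01,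
      ((w x t - v x) * (ε * deriv (σ x) t) + ε * deriv (w x) t * σ x t) :=
    integral_integral_swap hR2int
  -- FTC in time
  have hFTC : ∀ x : Fin (m+1) → ℝ, (∫ t in I01,
      ((w x t - v x) * (ε * deriv (σ x) t) + ε * deriv (w x) t * σ x t))
      = ε * ((w x 1 - v x) * σ x 1) - ε * ((w x 0 - v x) * σ x 0) := by
    intro x
    have hwx : ∀ t : ℝ, HasDerivAt (w x) (deriv (w x) t) t := by
      intro t
      have : DifferentiableAt ℝ (w x) t := by
        have := (hWsm.comp ((contDiff_const (c := x)).prodMk contDiff_id)).differentiable (by simp) t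
        exact this
      exact this.hasDerivAt
    have hsx : ∀ t : ℝ, HasDerivAt (σ x) (deriv (σ x) t) t := by
      intro t
      have : DifferentiableAt ℝ (σ x) t := by
        have := (hSsm.comp ((contDiff_const (c := x)).prodMk contDiff_id)).differentiable (by simp) t
        exact this
      exact this.hasDerivAt
    have hprod : ∀ t : ℝ, HasDerivAt (fun s => ε * ((w x s - v x) * σ x s))
        ((w x t - v x) * (ε * deriv (σ x) t) + ε * deriv (w x) t * σ x t) t := by
      intro t
      have h1 : HasDerivAt (fun s => (w x s - v x) * σ x s)
          (deriv (w x) t * σ x t + (w x t - v x) * deriv (σ x) t) t :=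
        ((hwx t).sub_const (v x)).mul (hsx t)
      have h2 : HasDerivAt (fun s => ε * ((w x s - v x) * σ x s))
          (ε * (deriv (w x) t * σ x t + (w x t - v x) * deriv (σ x) t)) t := h1.const_mul ε
      convert h2 using 1
      ring
    have hcont : Continuous (fun t : ℝ =>
        ((w x t - v x) * (ε * deriv (σ x) t) + ε * deriv (w x) t * σ x t)) := by
      have hwc : Continuous (w x) :=
        (hWsm.comp ((contDiff_const (c := x)).prodMk contDiff_id)).continuous
      have hsc : Continuous (σ x) :=
        (hSsm.comp ((contDiff_const (c := x)).prodMk contDiff_id)).continuous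
      have hdw : Continuous (fun t => deriv (w x) t) := by
        have he : (fun t => deriv (w x) t) = fun t =>
            fderiv ℝ (fun q : (Fin (m+1) → ℝ) × ℝ => w q.1 q.2) (x, t) (0, 1) :=
          funext fun t => hwt'rep x t
        rw [he]
        exact hWfc.comp (continuous_const.prodMk continuous_id)
      have hds : Continuous (fun t => deriv (σ x) t) := by
        have he : (fun t => deriv (σ x) t) = fun t =>
            fderiv ℝ (fun q : (Fin (m+1) → ℝ) × ℝ => σ q.1 q.2) (x, t) (0, 1) :=
          funext fun t => hst'rep x t
        rw [he]
        exact hSfc.comp (continuous_const.prodMk continuous_id)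
      exact ((hwc.sub continuous_const).mul (continuous_const.mul hds)).add
        ((continuous_const.mul hdw).mul hsc)
    rw [hI01, MeasureTheory.integral_Icc_eq_integral_Ioc,
      ← intervalIntegral.integral_of_le zero_le_one,
      intervalIntegral.integral_eq_sub_of_hasDerivAt (fun t _ => hprod t)
        (hcont.intervalIntegrable 0 1)]
  -- boundary bound
  have huσbound : ∀ t ∈ I01, |∫ x in cube (m+1), ε * ((w x t - v x) * σ x t)| ≤ 2 * M * ε := by
    intro t ht
    have hint : IntegrableOn (fun x => ε * ((w x t - v x) * σ x t)) (cube (m+1)) :=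
      integrableOn_cube (continuous_const.mul
        ((((hwt t).continuous).sub hvsm.continuous).mul (hst t).continuous))
    have hintub : IntegrableOn (fun x => ε * (2 * M * σ x t)) (cube (m+1)) :=
      integrableOn_cube (continuous_const.mul (continuous_const.mul (hst t).continuous))
    have hintlb : IntegrableOn (fun x => ε * (-(2 * M) * σ x t)) (cube (m+1)) :=
      integrableOn_cube (continuous_const.mul (continuous_const.mul (hst t).continuous))
    have hptub : ∀ x ∈ cube (m+1), ε * ((w x t - v x) * σ x t) ≤ ε * (2 * M * σ x t) := by
      intro x _
      have h1 := abs_le.1 (hwM x t ht)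
      have h2 := abs_le.1 (hvM x)
      have h3 := hσnn x t ht
      have : (w x t - v x) * σ x t ≤ 2 * M * σ x t :=
        mul_le_mul_of_nonneg_right (by linarith [h1.2, h2.1]) h3
      exact mul_le_mul_of_nonneg_left this hε0.le
    have hptlb : ∀ x ∈ cube (m+1), ε * (-(2 * M) * σ x t) ≤ ε * ((w x t - v x) * σ x t) := by
      intro x _
      have h1 := abs_le.1 (hwM x t ht)
      have h2 := abs_le.1 (hvM x)
      have h3 := hσnn x t ht
      have : -(2 * M) * σ x t ≤ (w x t - v x) * σ x t :=
        mul_le_mul_of_nonneg_right (by linarith [h1.1, h2.2]) h3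
      exact mul_le_mul_of_nonneg_left this hε0.le
    have hub := setIntegral_mono_on hint hintub cube_measurable hptub
    have hlb := setIntegral_mono_on hintlb hint cube_measurable hptlb
    have hubval : (∫ x in cube (m+1), ε * (2 * M * σ x t)) = 2 * M * ε := by
      have he : (fun x => ε * (2 * M * σ x t)) = fun x => (ε * (2 * M)) * σ x t := by
        funext x; ring
      rw [he, integral_const_mul, hmass t ht]
      ring
    have hlbval : (∫ x in cube (m+1), ε * (-(2 * M) * σ x t)) = -(2 * M * ε) := by
      have he : (fun x => ε * (-(2 * M) * σ x t)) = fun x => (ε * (-(2 * M))) * σ x t := by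
        funext x; ring
      rw [he, integral_const_mul, hmass t ht]
      ring
    rw [hubval] at hub
    rw [hlbval] at hlb
    exact abs_le.2 ⟨by linarith, hub⟩
  have hbound : (∫ x in cube (m+1),
      (ε * ((w x 1 - v x) * σ x 1) - ε * ((w x 0 - v x) * σ x 0))) ≤ 4 * M * ε := by
    have h1mem : (1:ℝ) ∈ I01 := Set.right_mem_Icc.2 zero_le_one
    have h0mem : (0:ℝ) ∈ I01 := Set.left_mem_Icc.2 zero_le_one
    have hint1 : IntegrableOn (fun x => ε * ((w x 1 - v x) * σ x 1)) (cube (m+1)) :=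
      integrableOn_cube (continuous_const.mul
        ((((hwt 1).continuous).sub hvsm.continuous).mul (hst 1).continuous))
    have hint0 : IntegrableOn (fun x => ε * ((w x 0 - v x) * σ x 0)) (cube (m+1)) :=
      integrableOn_cube (continuous_const.mul
        ((((hwt 0).continuous).sub hvsm.continuous).mul (hst 0).continuous))
    rw [integral_sub hint1 hint0]
    have hu1 := abs_le.1 (huσbound 1 h1mem)
    have hu0 := abs_le.1 (huσbound 0 h0mem)
    linarith [hu1.2, hu0.1]
  -- putting it together
  have hθmul : (∫ t in I01, θ * (∫ x in cube (m+1),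
        gradSq (fun y => w y t - v y) x * σ x t))
      = θ * ∫ t in I01, (∫ x in cube (m+1), gradSq (fun y => w y t - v y) x * σ x t) :=
    integral_const_mul θ _
  have hmono := setIntegral_mono_on (hGt_int.const_mul θ)
    (hRt_int.add (integrable_const Hbar)) hmeasI (fun t ht => key t ht)
  have hsplit : (∫ t in I01, ((∫ x in cube (m+1),
        ((w x t - v x) * (ε * deriv (σ x) t) + ε * deriv (w x) t * σ x t)) + Hbar))
      = (∫ t in I01, (∫ x in cube (m+1),
        ((w x t - v x) * (ε * deriv (σ x) t) + ε * deriv (w x) t * σ x t))) + Hbar := by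
    rw [integral_add hRt_int (integrable_const _), setIntegral_const]
    simp [hI01, Real.volume_Icc]
  have hftcint : (∫ x in cube (m+1), ∫ t in I01,
        ((w x t - v x) * (ε * deriv (σ x) t) + ε * deriv (w x) t * σ x t))
      = ∫ x in cube (m+1),
        (ε * ((w x 1 - v x) * σ x 1) - ε * ((w x 0 - v x) * σ x 0)) :=
    setIntegral_congr_fun cube_measurable (fun x _ => hFTC x)
  have hHbar2 : Hbar ≤ M * ε ^ 2 := (abs_le.1 hbM).2
  have hε2 : ε ^ 2 ≤ ε := by nlinarith
  have hmain : θ * (∫ t in I01, ∫ x in cube (m+1),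
      gradSq (fun y => w y t - v y) x * σ x t) ≤ 5 * M * ε := by
    rw [← hθmul]
    calc (∫ t in I01, θ * (∫ x in cube (m+1), gradSq (fun y => w y t - v y) x * σ x t))
        ≤ ∫ t in I01, ((∫ x in cube (m+1),
            ((w x t - v x) * (ε * deriv (σ x) t) + ε * deriv (w x) t * σ x t)) + Hbar) := hmono
      _ = (∫ t in I01, (∫ x in cube (m+1),
            ((w x t - v x) * (ε * deriv (σ x) t) + ε * deriv (w x) t * σ x t))) + Hbar := hsplit
      _ = (∫ x in cube (m+1),
            (ε * ((w x 1 - v x) * σ x 1) - ε * ((w x 0 - v x) * σ x 0))) + Hbar := by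
          rw [hswapint, hftcint]
      _ ≤ 4 * M * ε + M * ε ^ 2 := add_le_add hbound hHbar2
      _ ≤ 5 * M * ε := by nlinarith
  have hfin : (∫ t in I01, ∫ x in cube (m+1),
      gradSq (fun y => w y t - v y) x * σ x t) ≤ 5 * M / θ * ε := by
    rw [div_mul_eq_mul_div, le_div_iff₀ hθ]
    nlinarith [hmain]
  have hC : 5 * M / θ * ε ≤ (5 * M / θ + 1) * ε := by nlinarith [div_pos (by linarith : (0:ℝ) < 5 * M) hθ]
  calc (∫ t in I01, ∫ x in cube (m+1), gradSq (fun y => w y t - v y) x * σ x t)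
      ≤ 5 * M / θ * ε := hfin
    _ ≤ (5 * M / θ + 1) * ε := hC


end
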